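/- arXiv:2302.11197 — 2 statements merged into one kernel-verified Lean document; each statement's English description precedes it below -/
import Mathlib

section
/- If x is any real number and τ ~ U([-δ/2, δ/2]), then the quantization error w = Q_δ(x + τ) − (x + τ) is uniformly distributed on [−δ/2, δ/2) (up to endpoint convention), and its distribution does not depend on x. -/
open MeasureTheory Matrix

noncomputable def unifMeasure (δ : ℝ) : Measure ℝ :=
  (ENNReal.ofReal δ)⁻¹ • (volume.restrict (Set.Icc (-(δ/2)) (δ/2)))

/-- The uniform quantizer with level `δ`. -/
noncomputable def uniformQuantizer (δ a : ℝ) : ℝ := δ * ((⌊a / δ⌋ : ℝ) + 1 / 2)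

/-- For any fixed `x ∈ ℝ` and `τ ~ U([-δ/2, δ/2])`, the law of the quantization error
`w = Q_δ(x + τ) − (x + τ)` is the uniform distribution on an interval of length `δ`
centered at `0`, independently of `x`. -/
theorem quantization_error_law (δ : ℝ) (hδ : 0 < δ) (x : ℝ) :
    Measure.map (fun t : ℝ => uniformQuantizer δ (x + t) - (x + t)) (unifMeasure δ) =
      unifMeasure δ := by
  set f : ℝ → ℝ := fun t => uniformQuantizer δ (x + t) - (x + t) with hfdef
  set n : ℤ := ⌊(x - δ/2)/δ⌋ with hn
  set s : ℝ := δ*(n+1) - x with hs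
  have hfl : (n : ℝ) * δ ≤ x - δ/2 := by
    have := Int.floor_le ((x - δ/2)/δ)
    rwa [le_div_iff₀ hδ] at this
  have hfu : x - δ/2 < ((n : ℝ) + 1) * δ := by
    have := Int.lt_floor_add_one ((x - δ/2)/δ)
    rwa [div_lt_iff₀ hδ] at this
  have hs1 : -(δ/2) < s := by rw [hs]; nlinarith
  have hs2 : s ≤ δ/2 := by rw [hs]; nlinarith
  -- measurability of f
  have hf : Measurable f := by
    have h1 : Measurable fun t : ℝ => ((⌊(x + t) / δ⌋ : ℤ) : ℝ) :=
      measurable_from_top.comp ((measurable_id.const_add x).div_const δ).floor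
    unfold f uniformQuantizer
    exact ((measurable_const.mul (h1.add measurable_const)).sub
      (measurable_id.const_add x))
  -- the two pieces
  set A : Set ℝ := Set.Ico (-(δ/2)) s with hA
  set B : Set ℝ := Set.Icc s (δ/2) with hB
  have hfA : ∀ t ∈ A, f t = (s - δ/2) - t := by
    intro t ht
    have hfloor : ⌊(x + t) / δ⌋ = n := by
      rw [Int.floor_eq_iff]
      constructor
      · rw [le_div_iff₀ hδ]
        have := ht.1
        nlinarith
      · rw [div_lt_iff₀ hδ]
        have := ht.2
        rw [hs] at this
        push_cast
        nlinarith
    show uniformQuantizer δ (x + t) - (x + t) = (s - δ/2) - t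
    rw [uniformQuantizer, hfloor, hs]
    push_cast
    ring
  have hfB : ∀ t ∈ B, f t = (s + δ/2) - t := by
    intro t ht
    have hfloor : ⌊(x + t) / δ⌋ = n + 1 := by
      rw [Int.floor_eq_iff]
      constructor
      · rw [le_div_iff₀ hδ]
        have := ht.1
        rw [hs] at this
        push_cast
        nlinarith
      · rw [div_lt_iff₀ hδ]
        have := ht.2
        push_cast
        nlinarith
    show uniformQuantizer δ (x + t) - (x + t) = (s + δ/2) - t
    rw [uniformQuantizer, hfloor, hs]
    push_cast
    ring
  -- split the restriction
  have hdisj : Disjoint A B := by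
    rw [Set.disjoint_left]
    intro t ht ht'
    exact absurd ht'.1 (not_le.mpr ht.2)
  have hsplit : volume.restrict (Set.Icc (-(δ/2)) (δ/2)) =
      volume.restrict A + volume.restrict B := by
    rw [← Measure.restrict_union hdisj measurableSet_Icc, hA, hB,
      Set.Ico_union_Icc_eq_Icc hs1.le hs2]
  -- compute map on piece A
  have hmapA : Measure.map f (volume.restrict A) =
      volume.restrict (Set.Ioc (-(δ/2)) s) := by
    have hcong : f =ᵐ[volume.restrict A] fun t => (s - δ/2) - t :=
      ae_restrict_of_forall_mem measurableSet_Ico hfA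
    rw [Measure.map_congr hcong]
    have hmp : MeasurePreserving (fun t : ℝ => (s - δ/2) - t) volume volume :=
      Measure.measurePreserving_sub_left volume (s - δ/2)
    have hpre : (fun t : ℝ => (s - δ/2) - t) ⁻¹' (Set.Ioc (-(δ/2)) s) = A := by
      ext t
      simp only [Set.mem_preimage, Set.mem_Ioc, hA, Set.mem_Ico]
      constructor <;> intro h <;> constructor <;> linarith [h.1, h.2]
    rw [← hpre, ← Measure.restrict_map hmp.measurable measurableSet_Ioc, hmp.map_eq]
  -- compute map on piece B
  have hmapB : Measure.map f (volume.restrict B) =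
      volume.restrict (Set.Icc s (δ/2)) := by
    have hcong : f =ᵐ[volume.restrict B] fun t => (s + δ/2) - t :=
      ae_restrict_of_forall_mem measurableSet_Icc hfB
    rw [Measure.map_congr hcong]
    have hmp : MeasurePreserving (fun t : ℝ => (s + δ/2) - t) volume volume :=
      Measure.measurePreserving_sub_left volume (s + δ/2)
    have hpre : (fun t : ℝ => (s + δ/2) - t) ⁻¹' (Set.Icc s (δ/2)) = B := by
      ext t
      simp only [Set.mem_preimage, Set.mem_Icc, hB]
      constructor <;> intro h <;> constructor <;> linarith [h.1, h.2]
    rw [← hpre, ← Measure.restrict_map hmp.measurable measurableSet_Icc, hmp.map_eq]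
  -- put it together
  have hfinal : volume.restrict (Set.Ioc (-(δ/2)) s) + volume.restrict (Set.Icc s (δ/2)) =
      volume.restrict (Set.Icc (-(δ/2)) (δ/2)) := by
    have h1 : volume.restrict (Set.Icc s (δ/2)) = volume.restrict (Set.Ioc s (δ/2)) :=
      (Measure.restrict_congr_set Ioc_ae_eq_Icc).symm
    have hd : Disjoint (Set.Ioc (-(δ/2)) s) (Set.Ioc s (δ/2)) := by
      rw [Set.disjoint_left]; intro t ht ht'; exact absurd ht.2 (not_le.mpr ht'.1)
    rw [h1, ← Measure.restrict_union hd measurableSet_Ioc,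
      Set.Ioc_union_Ioc_eq_Ioc hs1.le hs2]
    exact Measure.restrict_congr_set Ioc_ae_eq_Icc
  rw [unifMeasure, Measure.map_smul, hsplit, Measure.map_add _ _ hf, hmapA, hmapB, hfinal, hsplit]
end

section
/- Triangle-type inequality for the error decomposition: for any Θ₀ with SVD-induced subspaces (M, M̄) and any Δ, ‖Θ₀ + Δ‖_nu ≥ ‖Θ₀‖_nu + ‖P_{M̄⊥}Δ‖_nu − ‖P_{M̄}Δ‖_nu. -/
open Matrix

/-- Nuclear norm (sum of singular values) of a real matrix. -/
noncomputable def nuclearNorm {m n : ℕ} (A : Matrix (Fin m) (Fin n) ℝ) : ℝ :=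
  ∑ i, Real.sqrt ((Matrix.isHermitian_conjTranspose_mul_self A).eigenvalues i)

/-- Operator (spectral) norm of a real matrix. -/
noncomputable def opNorm {m n : ℕ} (A : Matrix (Fin m) (Fin n) ℝ) : ℝ :=
  ‖LinearMap.toContinuousLinearMap (Matrix.toEuclideanLin A)‖

/-- Frobenius norm of a real matrix. -/
noncomputable def frobNorm {m n : ℕ} (A : Matrix (Fin m) (Fin n) ℝ) : ℝ :=
  Real.sqrt (∑ i, ∑ j, (A i j) ^ 2)

/-!
Put `Y := (1 - U₁U₁ᵀ) Δ (1 - V₁V₁ᵀ)`. The row and column spaces of `Y` are orthogonal to those of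
`Θ₀ = U₁ S V₁ᵀ`, so `(Θ₀ + Y)ᴴ(Θ₀ + Y) = Θ₀ᴴΘ₀ + YᴴY` with the two summands multiplying to zero.
Square roots of positive semidefinite matrices with zero product add, hence
`‖Θ₀ + Y‖_nu = ‖Θ₀‖_nu + ‖Y‖_nu`, and the triangle inequality applied to
`Θ₀ + Y = (Θ₀ + Δ) - (Δ - Y)` gives the claim.

The triangle inequality comes from duality: `tr(WᴴA) ≤ ‖A‖_nu` whenever `WᴴW ≤ 1`, by Cauchy–Schwarz
in an eigenbasis of `AᴴA`, and `W = A (AᴴA)^{-1/2}` (pseudo-inverse square root) attains equality.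
-/

open scoped MatrixOrder ComplexOrder

namespace Matrix

section FunctionalCalculus

variable {n 𝕜 : Type*} [Fintype n] [DecidableEq n] [RCLike 𝕜] {A B : Matrix n n 𝕜}

lemma cfcSqrt_mul_eq_zero (hA : 0 ≤ A) (h : Bᴴ * A * B = 0) : CFC.sqrt A * B = 0 := by
  rw [← conjTranspose_mul_self_eq_zero, conjTranspose_mul, ← star_eq_conjTranspose (CFC.sqrt A),
    (CFC.sqrt_nonneg A).isSelfAdjoint.star_eq, Matrix.mul_assoc, ← Matrix.mul_assoc (CFC.sqrt A),
    CFC.sqrt_mul_sqrt_self A, ← Matrix.mul_assoc, h]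

lemma cfcSqrt_mul_cfcSqrt_eq_zero (hA : 0 ≤ A) (hB : 0 ≤ B) (h : A * B = 0) :
    CFC.sqrt A * CFC.sqrt B = 0 := by
  have hBA : CFC.sqrt B * A = 0 :=
    cfcSqrt_mul_eq_zero hB (by rw [hA.posSemidef.isHermitian.eq, h, Matrix.zero_mul])
  refine cfcSqrt_mul_eq_zero hA ?_
  rw [← star_eq_conjTranspose, (CFC.sqrt_nonneg B).isSelfAdjoint.star_eq, hBA, Matrix.zero_mul]

lemma cfcSqrt_add_of_mul_eq_zero (hA : 0 ≤ A) (hB : 0 ≤ B) (h : A * B = 0) :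
    CFC.sqrt (A + B) = CFC.sqrt A + CFC.sqrt B := by
  have hAB := cfcSqrt_mul_cfcSqrt_eq_zero hA hB h
  have hBA : CFC.sqrt B * CFC.sqrt A = 0 := by
    simpa [(CFC.sqrt_nonneg A).isSelfAdjoint.star_eq, (CFC.sqrt_nonneg B).isSelfAdjoint.star_eq]
      using congrArg star hAB
  refine CFC.sqrt_unique ?_ (add_nonneg (CFC.sqrt_nonneg A) (CFC.sqrt_nonneg B))
  rw [add_mul, mul_add, mul_add, hAB, hBA, CFC.sqrt_mul_sqrt_self A, CFC.sqrt_mul_sqrt_self B,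
    add_zero, zero_add]

lemma IsHermitian.trace_cfc (hA : A.IsHermitian) (f : ℝ → ℝ) :
    (cfc f A).trace = ∑ i, (f (hA.eigenvalues i) : 𝕜) := by
  rw [hA.cfc_eq, IsHermitian.cfc, Unitary.conjStarAlgAut_apply, trace_mul_cycle,
    Unitary.coe_star_mul_self, Matrix.one_mul, trace_diagonal]
  rfl

end FunctionalCalculus

section Compression

variable {k l r R : Type*} [Fintype k] [Fintype l] [Fintype r] [DecidableEq k] [DecidableEq l]
  [DecidableEq r] [CommRing R]

lemma transpose_mul_one_sub_mul_transpose {U : Matrix k r R} (hU : Uᵀ * U = 1) :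
    Uᵀ * (1 - U * Uᵀ) = 0 := by
  rw [Matrix.mul_sub, Matrix.mul_one, ← Matrix.mul_assoc, hU, Matrix.one_mul, sub_self]

lemma transpose_mul_orthogonalCompression_eq_zero {U : Matrix k r R} (hU : Uᵀ * U = 1)
    (V : Matrix l r R) (S : Matrix r r R) (Δ : Matrix k l R) :
    (U * S * Vᵀ)ᵀ * ((1 - U * Uᵀ) * Δ * (1 - V * Vᵀ)) = 0 := by
  simp only [transpose_mul, transpose_transpose, Matrix.mul_assoc]
  rw [← Matrix.mul_assoc Uᵀ, transpose_mul_one_sub_mul_transpose hU, Matrix.zero_mul,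
    Matrix.mul_zero, Matrix.mul_zero]

end Compression

end Matrix

section NuclearNorm

variable {m n : ℕ}

lemma nuclearNorm_eq_trace_cfcSqrt (A : Matrix (Fin m) (Fin n) ℝ) :
    nuclearNorm A = (CFC.sqrt (Aᴴ * A)).trace := by
  have hA := posSemidef_conjTranspose_mul_self A
  rw [CFC.sqrt_eq_real_sqrt _ hA.nonneg, cfcₙ_eq_cfc, hA.isHermitian.trace_cfc]
  rfl

lemma nuclearNorm_neg (A : Matrix (Fin m) (Fin n) ℝ) : nuclearNorm (-A) = nuclearNorm A := by
  simp only [nuclearNorm_eq_trace_cfcSqrt, conjTranspose_neg, Matrix.neg_mul, Matrix.mul_neg,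
    neg_neg]

lemma nuclearNorm_add_of_orthogonal {A B : Matrix (Fin m) (Fin n) ℝ} (h₁ : Aᴴ * B = 0)
    (h₂ : A * Bᴴ = 0) : nuclearNorm (A + B) = nuclearNorm A + nuclearNorm B := by
  have hBA : Bᴴ * A = 0 := by simpa using congrArg conjTranspose h₁
  have hGram : (A + B)ᴴ * (A + B) = Aᴴ * A + Bᴴ * B := by
    rw [conjTranspose_add, Matrix.add_mul, Matrix.mul_add, Matrix.mul_add, h₁, hBA, add_zero,
      zero_add]
  have hPerp : Aᴴ * A * (Bᴴ * B) = 0 := by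
    rw [Matrix.mul_assoc, ← Matrix.mul_assoc A, h₂, Matrix.zero_mul, Matrix.mul_zero]
  rw [nuclearNorm_eq_trace_cfcSqrt, nuclearNorm_eq_trace_cfcSqrt, nuclearNorm_eq_trace_cfcSqrt,
    hGram, cfcSqrt_add_of_mul_eq_zero (posSemidef_conjTranspose_mul_self A).nonneg
      (posSemidef_conjTranspose_mul_self B).nonneg hPerp, trace_add]

lemma trace_conjTranspose_mul_le_sum_sqrt_diag {k l : Type*} [Fintype k] [Fintype l]
    (B C : Matrix k l ℝ) :
    (Bᴴ * C).trace ≤ ∑ i, √((Bᴴ * B) i i) * √((Cᴴ * C) i i) := by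
  simp only [trace, diag, mul_apply, conjTranspose_apply, star_trivial, ← sq]
  exact Finset.sum_le_sum fun i _ ↦ Real.sum_mul_le_sqrt_mul_sqrt _ _ _

lemma trace_conjTranspose_mul_le_nuclearNorm {W A : Matrix (Fin m) (Fin n) ℝ}
    (hW : Wᴴ * W ≤ 1) :
    (Wᴴ * A).trace ≤ nuclearNorm A := by
  have hA := isHermitian_conjTranspose_mul_self A
  set U : Matrix (Fin n) (Fin n) ℝ := (hA.eigenvectorUnitary : Matrix (Fin n) (Fin n) ℝ)
  have hUU : U * star U = 1 := Unitary.coe_mul_star_self _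
  have hTrace : (Wᴴ * A).trace = ((W * U)ᴴ * (A * U)).trace := by
    rw [conjTranspose_mul, Matrix.mul_assoc, trace_mul_comm Uᴴ, Matrix.mul_assoc, Matrix.mul_assoc,
      ← star_eq_conjTranspose, hUU, Matrix.mul_one]
  have hWdiag (i : Fin n) : ((W * U)ᴴ * (W * U)) i i ≤ 1 := by
    have := (le_iff.mp (star_left_conjugate_le_conjugate hW U)).diag_nonneg (i := i)
    rw [Matrix.mul_one, Unitary.coe_star_mul_self, Matrix.sub_apply, one_apply_eq] at this
    simpa [conjTranspose_mul, star_eq_conjTranspose, Matrix.mul_assoc] using this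
  have hAdiag (i : Fin n) : ((A * U)ᴴ * (A * U)) i i = hA.eigenvalues i := by
    have := hA.conjStarAlgAut_star_eigenvectorUnitary
    rw [Unitary.conjStarAlgAut_star_apply] at this
    rw [conjTranspose_mul, Matrix.mul_assoc, ← Matrix.mul_assoc Aᴴ, ← Matrix.mul_assoc,
      ← star_eq_conjTranspose, this]
    simp
  calc (Wᴴ * A).trace ≤ ∑ i, √(((W * U)ᴴ * (W * U)) i i) * √(((A * U)ᴴ * (A * U)) i i) :=
        hTrace ▸ trace_conjTranspose_mul_le_sum_sqrt_diag _ _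
    _ ≤ ∑ i, √(hA.eigenvalues i) := by
        gcongr with i
        rw [hAdiag i]
        exact mul_le_of_le_one_left (Real.sqrt_nonneg _) (Real.sqrt_le_one.mpr (hWdiag i))

lemma exists_trace_conjTranspose_mul_eq_nuclearNorm (A : Matrix (Fin m) (Fin n) ℝ) :
    ∃ W : Matrix (Fin m) (Fin n) ℝ, Wᴴ * W ≤ 1 ∧ (Wᴴ * A).trace = nuclearNorm A := by
  set M := Aᴴ * A
  have hM := isHermitian_conjTranspose_mul_self A
  have hcont (f : ℝ → ℝ) : ContinuousOn f (spectrum ℝ M) := M.finite_real_spectrum.continuousOn f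
  -- `(√0)⁻¹ = 0`, so `G` is the pseudo-inverse of `√M`.
  set G := cfc (fun t : ℝ ↦ (√t)⁻¹) M
  have hG : Gᴴ = G := (cfc_predicate (p := IsSelfAdjoint) _ M).star_eq
  refine ⟨A * G, ?_, ?_⟩
  · have : (A * G)ᴴ * (A * G) = cfc (fun t : ℝ ↦ (√t)⁻¹ * t * (√t)⁻¹) M := by
      rw [cfc_mul _ _ M (hcont _) (hcont _), cfc_mul _ _ M (hcont _) (hcont _), cfc_id' ℝ M,
        conjTranspose_mul, hG, Matrix.mul_assoc, ← Matrix.mul_assoc Aᴴ, ← Matrix.mul_assoc]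
    rw [this]
    refine cfc_le_one _ M fun t _ ↦ ?_
    rw [inv_mul_eq_div, Real.div_sqrt]
    exact mul_inv_le_one
  · have : (A * G)ᴴ * A = cfc (fun t : ℝ ↦ (√t)⁻¹ * t) M := by
      rw [cfc_mul _ _ M (hcont _) (hcont _), cfc_id' ℝ M, conjTranspose_mul, hG, Matrix.mul_assoc]
    rw [this, hM.trace_cfc]
    simp only [inv_mul_eq_div, Real.div_sqrt]
    rfl

lemma nuclearNorm_add_le (A B : Matrix (Fin m) (Fin n) ℝ) :
    nuclearNorm (A + B) ≤ nuclearNorm A + nuclearNorm B := by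
  obtain ⟨W, hW, hWtrace⟩ := exists_trace_conjTranspose_mul_eq_nuclearNorm (A + B)
  rw [← hWtrace, Matrix.mul_add, trace_add]
  exact add_le_add (trace_conjTranspose_mul_le_nuclearNorm hW)
    (trace_conjTranspose_mul_le_nuclearNorm hW)

end NuclearNorm

/-- Triangle-type inequality for the error decomposition: with `Θ₀ = U₁ S V₁ᵀ` and the
projections `P_{M̄⊥}Δ = (I − U₁U₁ᵀ) Δ (I − V₁V₁ᵀ)`, `P_{M̄}Δ = Δ − P_{M̄⊥}Δ`, one has
`‖Θ₀ + Δ‖_nu ≥ ‖Θ₀‖_nu + ‖P_{M̄⊥}Δ‖_nu − ‖P_{M̄}Δ‖_nu`. -/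
theorem nuclearNorm_add_ge_decomposition (d₁ d₂ r : ℕ)
    (U₁ : Matrix (Fin d₁) (Fin r) ℝ) (V₁ : Matrix (Fin d₂) (Fin r) ℝ)
    (hU₁ : U₁ᵀ * U₁ = 1) (hV₁ : V₁ᵀ * V₁ = 1)
    (S : Matrix (Fin r) (Fin r) ℝ)
    (Θ₀ Δ : Matrix (Fin d₁) (Fin d₂) ℝ)
    (hΘ₀ : Θ₀ = U₁ * S * V₁ᵀ) :
    nuclearNorm Θ₀ + nuclearNorm ((1 - U₁ * U₁ᵀ) * Δ * (1 - V₁ * V₁ᵀ)) -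
        nuclearNorm (Δ - (1 - U₁ * U₁ᵀ) * Δ * (1 - V₁ * V₁ᵀ)) ≤
      nuclearNorm (Θ₀ + Δ) := by
  set Y := (1 - U₁ * U₁ᵀ) * Δ * (1 - V₁ * V₁ᵀ)
  have hDecomp : nuclearNorm (Θ₀ + Y) = nuclearNorm Θ₀ + nuclearNorm Y := by
    refine nuclearNorm_add_of_orthogonal ?_ ?_ <;>
      rw [conjTranspose_eq_transpose_of_trivial, hΘ₀]
    · exact transpose_mul_orthogonalCompression_eq_zero hU₁ V₁ S Δ
    · simpa [Y, transpose_sub, transpose_mul, Matrix.mul_assoc] using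
        transpose_mul_orthogonalCompression_eq_zero hV₁ U₁ Sᵀ Δᵀ
  have hTriangle : nuclearNorm (Θ₀ + Y) ≤ nuclearNorm (Θ₀ + Δ) + nuclearNorm (Δ - Y) := by
    calc nuclearNorm (Θ₀ + Y) = nuclearNorm ((Θ₀ + Δ) + -(Δ - Y)) := by congr 1; abel
      _ ≤ nuclearNorm (Θ₀ + Δ) + nuclearNorm (-(Δ - Y)) := nuclearNorm_add_le _ _
      _ = nuclearNorm (Θ₀ + Δ) + nuclearNorm (Δ - Y) := by rw [nuclearNorm_neg]
  linarith
end
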